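/- arXiv:1601.06433 — 4 statements merged into one kernel-verified Lean document; each statement's English description precedes it below -/
import Mathlib

section
/- The improper integral ∫₀^{π/2} (1/sin(s) − 1/s) ds converges and equals ln(4/π). -/
/-!
Since `(log (tan (s/2)))' = 1 / sin s`, a primitive of the integrand on `(0, π)` is
`log (2 tan (s/2) / s) = log (sinc (s/2) / cos (s/2))`; the second form is continuous on `[0, π)`
and vanishes at `0`, so the integral is its value `log (4/π)` at `π/2`. Integrability comes for free
from the fundamental theorem of calculus because the integrand is nonnegative (`sin s ≤ s`).
-/

open Real intervalIntegral Set

lemma one_div_le_one_div_sin {s : ℝ} (hs : 0 < s) (hsπ : s < π) : 1 / s ≤ 1 / sin s :=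
  one_div_le_one_div_of_le (sin_pos_of_pos_of_lt_pi hs hsπ) (sin_le hs.le)

lemma cos_half_pos {s : ℝ} (hs : -π < s) (hsπ : s < π) : 0 < cos (s / 2) :=
  cos_pos_of_mem_Ioo ⟨by linarith, by linarith⟩

lemma hasDerivAt_log_tan_half {x : ℝ} (hx : 0 < x) (hxπ : x < π) :
    HasDerivAt (fun s => log (tan (s / 2))) (1 / sin x) x := by
  have hcos := cos_half_pos (by linarith [pi_pos]) hxπ
  have htan : HasDerivAt (fun s => tan (s / 2)) (1 / cos (x / 2) ^ 2 * (1 / 2)) x :=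
    HasDerivAt.comp x (hasDerivAt_tan hcos.ne') ((hasDerivAt_id' x).div_const 2)
  convert htan.log (tan_pos_of_pos_of_lt_pi_div_two (x := x / 2) (by linarith) (by linarith)).ne'
    using 1
  rw [show x = 2 * (x / 2) by ring, sin_two_mul, tan_eq_sin_div_cos]
  field_simp

lemma sinc_half_div_cos_half_pos {s : ℝ} (hs : 0 ≤ s) (hsπ : s < π) :
    0 < sinc (s / 2) / cos (s / 2) := by
  refine div_pos ?_ (cos_half_pos (by linarith [pi_pos]) hsπ)
  rcases hs.eq_or_lt with rfl | hs
  · simp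
  · rw [sinc_of_ne_zero (by positivity)]
    exact div_pos (sin_pos_of_pos_of_lt_pi (by linarith) (by linarith)) (by positivity)

lemma continuousOn_log_sinc_half_div_cos_half :
    ContinuousOn (fun s => log (sinc (s / 2) / cos (s / 2))) (Ico 0 π) := by
  refine ContinuousOn.log ?_ fun s hs => (sinc_half_div_cos_half_pos hs.1 hs.2).ne'
  refine ContinuousOn.div (by fun_prop) (by fun_prop) fun s hs => ?_
  exact (cos_half_pos (by linarith [pi_pos, hs.1]) hs.2).ne'

lemma log_sinc_half_div_cos_half_eq {s : ℝ} (hs : 0 < s) (hsπ : s < π) :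
    log (sinc (s / 2) / cos (s / 2)) = log (tan (s / 2)) - log s + log 2 := by
  have hcos := cos_half_pos (by linarith [pi_pos]) hsπ
  have hsin : 0 < sin (s / 2) := sin_pos_of_pos_of_lt_pi (by linarith) (by linarith)
  rw [sinc_of_ne_zero (by positivity), tan_eq_sin_div_cos, ← log_div (by positivity) hs.ne',
    ← log_mul (by positivity) two_ne_zero]
  congr 1
  field_simp

lemma hasDerivAt_log_sinc_half_div_cos_half {x : ℝ} (hx : 0 < x) (hxπ : x < π) :
    HasDerivAt (fun s => log (sinc (s / 2) / cos (s / 2))) (1 / sin x - 1 / x) x := by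
  have h := ((hasDerivAt_log_tan_half hx hxπ).sub (hasDerivAt_log hx.ne')).add_const (log 2)
  rw [inv_eq_one_div] at h
  refine h.congr_of_eventuallyEq ?_
  filter_upwards [Ioo_mem_nhds hx hxπ] with s hs
  exact log_sinc_half_div_cos_half_eq hs.1 hs.2

theorem integral_one_div_sin_sub_one_div :
    IntervalIntegrable (fun s : ℝ => 1 / Real.sin s - 1 / s) MeasureTheory.volume 0 (π / 2) ∧
    ∫ s in (0 : ℝ)..(π / 2), (1 / Real.sin s - 1 / s) = Real.log (4 / π) := by
  set F : ℝ → ℝ := fun s => log (sinc (s / 2) / cos (s / 2))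
  have hle : 0 ≤ π / 2 := by positivity
  have hcont : ContinuousOn F (Icc 0 (π / 2)) :=
    continuousOn_log_sinc_half_div_cos_half.mono (Icc_subset_Ico_right (by linarith [pi_pos]))
  have hderiv : ∀ x ∈ Ioo 0 (π / 2), HasDerivAt F (1 / sin x - 1 / x) x :=
    fun x hx => hasDerivAt_log_sinc_half_div_cos_half hx.1 (by linarith [hx.2, pi_pos])
  have hint : IntervalIntegrable (fun s => 1 / sin s - 1 / s) MeasureTheory.volume 0 (π / 2) :=
    (intervalIntegrable_iff_integrableOn_Ioc_of_le hle).2 <| integrableOn_deriv_of_nonneg hcont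
      hderiv fun x hx => sub_nonneg.2 <| one_div_le_one_div_sin hx.1 (by linarith [hx.2, pi_pos])
  refine ⟨hint, ?_⟩
  rw [integral_eq_sub_of_hasDerivAt_of_le hle hcont hderiv hint]
  simp only [F, show π / 2 / 2 = π / 4 by ring, sinc_of_ne_zero (by positivity : π / 4 ≠ 0),
    sin_pi_div_four, cos_pi_div_four, zero_div, sinc_zero, cos_zero, div_one, log_one, sub_zero]
  congr 1
  field_simp
end

section
/- For every k ∈ ℕ with k ≥ 1, the integral ∫₀^π sin²(ks)/sin(s) ds equals 2 · Σ_{j=1}^{k} 1/(2j−1). -/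
/-!
Telescoping `sin² ((j + 1) s) - sin² (j s) = sin ((2j + 1) s) sin s` gives
`sin² (k s) / sin s = ∑_{j=1}^k sin ((2j - 1) s)` on `(0, π)`, and each odd frequency
integrates to `∫₀^π sin (n s) ds = (1 - cos (n π)) / n = 2 / n`.
-/

open Real Finset

lemma sin_sq_sub_sin_sq (x y : ℝ) : sin x ^ 2 - sin y ^ 2 = sin (x + y) * sin (x - y) := by
  rw [sin_add, sin_sub]
  linear_combination sin y ^ 2 * cos_sq_add_sin_sq x - sin x ^ 2 * cos_sq_add_sin_sq y

lemma sin_nat_mul_sq_eq_sin_mul_sum (k : ℕ) (s : ℝ) :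
    sin (k * s) ^ 2 = sin s * ∑ j ∈ Icc 1 k, sin ((2 * j - 1) * s) := by
  induction k with
  | zero => simp
  | succ k ih =>
    have h := sin_sq_sub_sin_sq ((k + 1) * s) (k * s)
    rw [show (k + 1) * s + k * s = (2 * (k + 1) - 1) * s by ring,
      show (k + 1) * s - k * s = s by ring] at h
    rw [sum_Icc_succ_top (by omega), mul_add, ← ih]
    push_cast
    linear_combination h

lemma sin_sq_nat_mul_div_sin_eq_sum (k : ℕ) {s : ℝ} (hs : sin s ≠ 0) :
    sin (k * s) ^ 2 / sin s = ∑ j ∈ Icc 1 k, sin ((2 * j - 1) * s) := by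
  rw [sin_nat_mul_sq_eq_sin_mul_sum, mul_div_cancel_left₀ _ hs]

lemma integral_sin_int_mul_of_odd {n : ℤ} (hn : Odd n) :
    ∫ s in (0 : ℝ)..π, sin (n * s) = 2 / n := by
  have hn₀ : (n : ℝ) ≠ 0 := Int.cast_ne_zero.mpr (by rintro rfl; simp at hn)
  rw [intervalIntegral.integral_comp_mul_left sin hn₀, integral_sin, mul_zero, cos_zero,
    cos_int_mul_pi, hn.neg_one_zpow, smul_eq_mul]
  field_simp
  norm_num

theorem integral_sin_sq_div_sin_general (k : ℕ) :
    ∫ s in (0 : ℝ)..π, Real.sin (k * s) ^ 2 / Real.sin s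
      = 2 * ∑ j ∈ Finset.Icc 1 k, (1 : ℝ) / (2 * (j : ℝ) - 1) := by
  have h_integrand : (Set.Ioo 0 π).EqOn (fun s ↦ sin (k * s) ^ 2 / sin s)
      (fun s ↦ ∑ j ∈ Icc 1 k, sin ((2 * j - 1) * s)) :=
    fun s hs ↦ sin_sq_nat_mul_div_sin_eq_sum k (sin_pos_of_mem_Ioo hs).ne'
  have h_integrable (j : ℕ) :
      IntervalIntegrable (fun s ↦ sin ((2 * (j : ℝ) - 1) * s)) MeasureTheory.volume 0 π :=
    (by fun_prop : Continuous _).intervalIntegrable _ _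
  rw [intervalIntegral.integral_congr_Ioo_of_le pi_pos.le h_integrand,
    intervalIntegral.integral_finsetSum fun j _ ↦ h_integrable j, mul_sum]
  refine sum_congr rfl fun j _ ↦ ?_
  have h_term := integral_sin_int_mul_of_odd (⟨j - 1, by ring⟩ : Odd (2 * (j : ℤ) - 1))
  push_cast at h_term
  rw [h_term, mul_one_div]

theorem integral_sin_sq_div_sin (k : ℕ) (hk : 1 ≤ k) :
    ∫ s in (0 : ℝ)..π, Real.sin (k * s) ^ 2 / Real.sin s
      = 2 * ∑ j ∈ Finset.Icc 1 k, (1 : ℝ) / (2 * (j : ℝ) - 1) :=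
  integral_sin_sq_div_sin_general k
end

section
/- For every k ∈ ℕ with k ≥ 1, the strict inequality Σ_{j=1}^{k} 1/(2j−1) > (ln k + ln 4 + γ)/2 holds, where γ is the Euler–Mascheroni constant. -/
/-!
Since `∑_{j ≤ k} 1/(2j-1) = H_{2k} - H_k/2`, the sequence
`c_k = H_{2k} - H_k/2 - (log k)/2` tends to `log 2 + γ/2`, because `H_n - log n → γ`.
It is strictly decreasing: `c_k - c_{k+1} = (log (1 + 1/k))/2 - 1/(2k+1) > 0`, the first term of
the series `log (1 + 1/k) = ∑ 2/((2m+1)(2k+1)^(2m+1))` already being `2/(2k+1)`.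
Hence every `c_k` lies strictly above its limit, which is the claim.
-/

open Real Filter Topology

theorem two_div_two_mul_add_one_lt_log_one_add_inv {a : ℝ} (ha : 0 < a) :
    2 / (2 * a + 1) < log (1 + a⁻¹) := by
  set f : ℕ → ℝ := fun m => 2 * (1 / (2 * m + 1)) * (1 / (2 * a + 1)) ^ (2 * m + 1)
  have hf_pos : ∀ m, 0 < f m := fun m => by positivity
  calc 2 / (2 * a + 1) = f 0 := by simp [f]; ring
    _ < ∑ m ∈ Finset.range 2, f m := by simp [Finset.sum_range_succ, hf_pos 1]
    _ ≤ log (1 + a⁻¹) :=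
      sum_le_hasSum _ (fun m _ => (hf_pos m).le) (hasSum_log_one_add_inv ha)

theorem sum_Icc_one_div_two_mul_sub_one (k : ℕ) :
    ∑ j ∈ Finset.Icc 1 k, (1 : ℝ) / (2 * (j : ℝ) - 1) = harmonic (2 * k) - harmonic k / 2 := by
  induction k with
  | zero => simp
  | succ n ih =>
    rw [Finset.sum_Icc_succ_top (by omega), ih, show 2 * (n + 1) = 2 * n + 1 + 1 by ring,
      harmonic_succ (2 * n + 1), harmonic_succ (2 * n), harmonic_succ n]
    push_cast
    rw [show 2 * ((n : ℝ) + 1) - 1 = 2 * n + 1 by ring]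
    field_simp
    ring

/-- The sequence `c_{n+1}` of the header, shifted so that it is indexed by all of `ℕ`. -/
noncomputable def oddHarmonicSeq (n : ℕ) : ℝ :=
  harmonic (2 * (n + 1)) - harmonic (n + 1) / 2 - log (n + 1) / 2

theorem oddHarmonicSeq_succ (n : ℕ) :
    oddHarmonicSeq (n + 1) =
      oddHarmonicSeq n + 1 / (2 * ((n : ℝ) + 1) + 1) - log (1 + ((n : ℝ) + 1)⁻¹) / 2 := by
  have hlog : log (1 + ((n : ℝ) + 1)⁻¹) = log ((n : ℝ) + 1 + 1) - log (n + 1) := by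
    rw [← log_div (by positivity) (by positivity)]
    congr 1
    field_simp
  rw [hlog, oddHarmonicSeq, oddHarmonicSeq, show 2 * (n + 1 + 1) = 2 * (n + 1) + 1 + 1 by ring,
    harmonic_succ (2 * (n + 1) + 1), harmonic_succ (2 * (n + 1)), harmonic_succ (n + 1)]
  push_cast
  field_simp
  ring

theorem strictAnti_oddHarmonicSeq : StrictAnti oddHarmonicSeq := by
  refine strictAnti_nat_of_succ_lt fun n => ?_
  have key := two_div_two_mul_add_one_lt_log_one_add_inv (a := (n : ℝ) + 1) (by positivity)
  rw [oddHarmonicSeq_succ]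
  linarith [mul_one_div (2 : ℝ) (2 * ((n : ℝ) + 1) + 1)]

theorem tendsto_oddHarmonicSeq :
    Tendsto oddHarmonicSeq atTop (𝓝 (log 2 + eulerMascheroniConstant / 2)) := by
  have h_even := tendsto_harmonic_sub_log.comp
    ((tendsto_id.const_mul_atTop' two_pos).comp (tendsto_add_atTop_nat 1))
  have h_all := tendsto_harmonic_sub_log.comp (tendsto_add_atTop_nat 1)
  convert (h_even.sub (h_all.div_const 2)).const_add (log 2) using 1
  · funext n
    simp only [oddHarmonicSeq, Function.comp_apply, id]
    push_cast
    rw [log_mul two_ne_zero (by positivity)]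
    ring
  · congr 1; ring

theorem log_two_add_half_eulerMascheroniConstant_lt_oddHarmonicSeq (n : ℕ) :
    log 2 + eulerMascheroniConstant / 2 < oddHarmonicSeq n :=
  (strictAnti_oddHarmonicSeq.antitone.le_of_tendsto tendsto_oddHarmonicSeq (n + 1)).trans_lt
    (strictAnti_oddHarmonicSeq (Nat.lt_succ_self n))

theorem odd_harmonic_lower_bound (k : ℕ) (hk : 1 ≤ k) :
    (∑ j ∈ Finset.Icc 1 k, (1 : ℝ) / (2 * (j : ℝ) - 1))
      > (Real.log (k : ℝ) + Real.log 4 + Real.eulerMascheroniConstant) / 2 := by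
  obtain ⟨n, rfl⟩ := Nat.exists_eq_add_of_le' hk
  have h_log_four : log 4 = 2 * log 2 := by
    rw [show (4 : ℝ) = 2 ^ 2 by norm_num, log_pow, Nat.cast_ofNat]
  have h_bound := log_two_add_half_eulerMascheroniConstant_lt_oddHarmonicSeq n
  rw [oddHarmonicSeq] at h_bound
  rw [sum_Icc_one_div_two_mul_sub_one]
  push_cast
  linarith
end

section
/- Let G : (0,∞) → ℝ be strictly decreasing and convex, let σ : ℝ → ℝ³ be measurable and L-periodic, and suppose ∫₀^L |σ(s+u) − σ(s)| ds < (L²/π) sin(πu/L) for some u ∈ (0, L), with |σ(s+u) − σ(s)| > 0 for a.e. s. Then (1/L)∫₀^L G(|σ(s+u) − σ(s)|) ds > G((L/π) sin(πu/L)). -/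
/-!
The mean `m` of `s ↦ ‖σ (s + u) - σ s‖` over a period is positive and, by assumption,
smaller than `c = (L / π) sin (π u / L)`, so `G c < G m`. Jensen's inequality `G m ≤ ⨍ G (…)`
is obtained by integrating a supporting line of `G` at `m`; Mathlib's version needs `G`
continuous on a closed domain, which `Ioi 0` is not.
-/
open Real MeasureTheory Set
open scoped Interval

namespace ConvexOn

variable {S : Set ℝ} {g : ℝ → ℝ}

theorem add_rightDeriv_mul_sub_le (hg : ConvexOn ℝ S g) {x y : ℝ} (hx : x ∈ interior S)
    (hy : y ∈ S) : g x + derivWithin g (Ioi x) x * (y - x) ≤ g y := by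
  rcases lt_trichotomy y x with hyx | rfl | hxy
  · have h := (hg.slope_le_leftDeriv_of_mem_interior hy hx hyx).trans
      (hg.leftDeriv_le_rightDeriv_of_mem_interior hx)
    rw [slope_def_field, div_le_iff₀ (sub_pos.2 hyx)] at h
    linarith
  · simp
  · have h := hg.rightDeriv_le_slope_of_mem_interior hx hy hxy
    rw [slope_def_field, le_div_iff₀ (sub_pos.2 hxy)] at h
    linarith

variable {α : Type*} [MeasurableSpace α] {μ : Measure α} {f : α → ℝ}

theorem map_average_le_of_mem_interior [IsFiniteMeasure μ] [NeZero μ] (hg : ConvexOn ℝ S g)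
    (hfs : ∀ᵐ a ∂μ, f a ∈ S) (hmean : ⨍ a, f a ∂μ ∈ interior S)
    (hfi : Integrable f μ) (hgi : Integrable (g ∘ f) μ) :
    g (⨍ a, f a ∂μ) ≤ ⨍ a, g (f a) ∂μ := by
  set m := ⨍ a, f a ∂μ
  set d := derivWithin g (Ioi m) m
  have hdev : Integrable (fun a => d * (f a - m)) μ := (hfi.sub (integrable_const m)).const_mul d
  have hline : ∫ a, g m + d * (f a - m) ∂μ = μ.real univ * g m := by
    rw [integral_add (integrable_const _) hdev,
      integral_const_mul, integral_sub_average, integral_const, smul_eq_mul, mul_zero, add_zero]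
  have hle : μ.real univ * g m ≤ ∫ a, g (f a) ∂μ :=
    hline ▸ integral_mono_ae ((integrable_const _).add hdev) hgi
      (hfs.mono fun a ha => hg.add_rightDeriv_mul_sub_le hmean ha)
  rwa [average_eq, smul_eq_mul, le_inv_mul_iff₀ measureReal_univ_pos]

theorem map_setAverage_le_of_mem_interior {t : Set α} (hg : ConvexOn ℝ S g)
    (h0 : μ t ≠ 0) (ht : μ t ≠ ⊤) (hfs : ∀ᵐ a ∂μ.restrict t, f a ∈ S)
    (hmean : ⨍ a in t, f a ∂μ ∈ interior S) (hfi : IntegrableOn f t μ)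
    (hgi : IntegrableOn (g ∘ f) t μ) :
    g (⨍ a in t, f a ∂μ) ≤ ⨍ a in t, g (f a) ∂μ :=
  have := Fact.mk ht.lt_top
  have := NeZero.mk h0
  hg.map_average_le_of_mem_interior hfs hmean hfi hgi

end ConvexOn

theorem MeasureTheory.setAverage_pos_of_ae_pos {α : Type*} [MeasurableSpace α] {μ : Measure α}
    {f : α → ℝ} {t : Set α} (h0 : μ t ≠ 0) (ht : μ t ≠ ⊤) (hfi : IntegrableOn f t μ)
    (hpos : ∀ᵐ a ∂μ.restrict t, 0 < f a) : 0 < ⨍ a in t, f a ∂μ := by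
  have := Fact.mk ht.lt_top
  obtain ⟨a, ha, hle⟩ :=
    exists_notMem_null_le_average (mt Measure.restrict_eq_zero.1 h0) hfi (ae_iff.1 hpos)
  exact (not_not.1 ha).trans_le hle

theorem jensen_strict_chord_general
    (L : ℝ) (hL : 0 < L) (G : ℝ → ℝ)
    (hGanti : StrictAntiOn G (Set.Ioi 0))
    (hGconv : ConvexOn ℝ (Set.Ioi 0) G)
    (σ : ℝ → EuclideanSpace ℝ (Fin 3))
    (u : ℝ) (hu : u ∈ Set.Ioo 0 L)
    (hint : IntervalIntegrable (fun s : ℝ => ‖σ (s + u) - σ s‖) volume 0 L)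
    (hintG : IntervalIntegrable (fun s : ℝ => G ‖σ (s + u) - σ s‖) volume 0 L)
    (hpos : ∀ᵐ s ∂(volume.restrict (Set.Icc (0 : ℝ) L)), 0 < ‖σ (s + u) - σ s‖)
    (hlt : (∫ s in (0 : ℝ)..L, ‖σ (s + u) - σ s‖) < L ^ 2 / π * Real.sin (π * u / L)) :
    (1 / L) * (∫ s in (0 : ℝ)..L, G ‖σ (s + u) - σ s‖)
      > G (L / π * Real.sin (π * u / L)) := by
  have hvol : volume (Ι 0 L) = ENNReal.ofReal L := by
    rw [uIoc_of_le hL.le, Real.volume_Ioc, sub_zero]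
  have h0 : volume (Ι 0 L) ≠ 0 := by simpa [hvol] using hL
  have hfin : volume (Ι 0 L) ≠ ⊤ := hvol ▸ ENNReal.ofReal_ne_top
  have hpos_uIoc : ∀ᵐ s ∂(volume.restrict (Ι 0 L)), 0 < ‖σ (s + u) - σ s‖ :=
    ae_restrict_of_ae_restrict_of_subset (uIoc_of_le hL.le ▸ Ioc_subset_Icc_self) hpos
  have hmean_pos : 0 < ⨍ s in 0..L, ‖σ (s + u) - σ s‖ :=
    setAverage_pos_of_ae_pos h0 hfin hint.def' hpos_uIoc
  have hmean_lt : ⨍ s in 0..L, ‖σ (s + u) - σ s‖ < L / π * sin (π * u / L) := by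
    rw [interval_average_eq_div, sub_zero, div_lt_iff₀ hL]
    linarith [show L ^ 2 / π * sin (π * u / L) = L / π * sin (π * u / L) * L by ring]
  have hchord_pos : 0 < L / π * sin (π * u / L) := by
    refine mul_pos (div_pos hL pi_pos)
      (sin_pos_of_pos_of_lt_pi (div_pos (mul_pos pi_pos hu.1) hL) ?_)
    rw [div_lt_iff₀ hL]
    exact mul_lt_mul_of_pos_left hu.2 pi_pos
  calc G (L / π * sin (π * u / L)) < G (⨍ s in 0..L, ‖σ (s + u) - σ s‖) :=
        hGanti hmean_pos hchord_pos hmean_lt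
    _ ≤ ⨍ s in 0..L, G ‖σ (s + u) - σ s‖ :=
        hGconv.map_setAverage_le_of_mem_interior h0 hfin hpos_uIoc (by rwa [interior_Ioi])
          hint.def' hintG.def'
    _ = 1 / L * ∫ s in 0..L, G ‖σ (s + u) - σ s‖ := by
        rw [interval_average_eq_div, sub_zero, div_eq_inv_mul, one_div]

theorem jensen_strict_chord
    (L : ℝ) (hL : 0 < L) (G : ℝ → ℝ)
    (hGanti : StrictAntiOn G (Set.Ioi 0))
    (hGconv : ConvexOn ℝ (Set.Ioi 0) G)
    (σ : ℝ → EuclideanSpace ℝ (Fin 3))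
    (hmeas : Measurable σ)
    (hper : ∀ s : ℝ, σ (s + L) = σ s)
    (u : ℝ) (hu : u ∈ Set.Ioo 0 L)
    (hint : IntervalIntegrable (fun s : ℝ => ‖σ (s + u) - σ s‖) volume 0 L)
    (hintG : IntervalIntegrable (fun s : ℝ => G ‖σ (s + u) - σ s‖) volume 0 L)
    (hpos : ∀ᵐ s ∂(volume.restrict (Set.Icc (0 : ℝ) L)), 0 < ‖σ (s + u) - σ s‖)
    (hlt : (∫ s in (0 : ℝ)..L, ‖σ (s + u) - σ s‖) < L ^ 2 / π * Real.sin (π * u / L)) :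
    (1 / L) * (∫ s in (0 : ℝ)..L, G ‖σ (s + u) - σ s‖)
      > G (L / π * Real.sin (π * u / L)) :=
  jensen_strict_chord_general L hL G hGanti hGconv σ u hu hint hintG hpos hlt
end
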